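/- arXiv:0901.2915 — 6 statements merged into one kernel-verified Lean document; each statement's English description precedes it below -/
import Mathlib

section
/- Every finitely generated subsemimodule of ℝ_max^n (i.e., a set of the form {Ex : x ∈ ℝ_max^q} for some matrix E ∈ ℝ_max^{n×q}, equivalently the set of max-plus linear combinations of finitely many fixed vectors) is a closed subset of ℝ_max^n. -/
/-!
Max-plus (tropical) framework.

The max-plus semiring `ℝ_max = ℝ ∪ {-∞}` is modelled as `WithBot ℝ`:
max-plus addition `a ⊕ b = max a b` is the lattice `⊔`, and max-plus
multiplication `a ⊙ b = a + b` is `+` (with `⊥ = -∞` absorbing).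
The topology induced by the metric `d(a,b) = |exp a - exp b|` is the
order topology.
-/

/-- The max-plus semiring `ℝ ∪ {-∞}`. -/
abbrev Rmax : Type := WithBot ℝ

/-- The topology of `ℝ_max` (the order topology, which coincides with the
topology induced by the metric `d(a,b) = |exp a - exp b|`). -/
instance : TopologicalSpace Rmax := Preorder.topology Rmax

instance : OrderTopology Rmax := ⟨rfl⟩

/-- Vectors with entries in a (max-plus-like) semiring `R`. -/
abbrev Vec (R : Type*) (n : ℕ) := Fin n → R

section Defs

variable {R : Type*} [LinearOrder R] [Add R] [OrderBot R]

/-- Max-plus scalar action on a vector: `(λ x)_i = λ ⊙ x_i = λ + x_i`. -/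
def sm {n : ℕ} (lam : R) (x : Vec R n) : Vec R n := fun i => lam + x i

/-- Max-plus matrix-vector product: `(A x)_i = ⊕_k A_{ik} ⊙ x_k = max_k (A_{ik} + x_k)`. -/
def mulVecMP {m n : ℕ} (A : Matrix (Fin m) (Fin n) R) (x : Vec R n) : Vec R m :=
  fun i => Finset.univ.sup fun k => A i k + x k

/-- A subsemimodule (max-plus cone) of `R^n`: a subset stable under
max-plus linear combinations `λ x ⊕ μ y`. -/
def IsSemimodule {n : ℕ} (K : Set (Vec R n)) : Prop :=
  ∀ x ∈ K, ∀ y ∈ K, ∀ lam mu : R, (sm lam x ⊔ sm mu y) ∈ K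

/-- Max-plus scalar action on a pair of vectors. -/
def smP {n : ℕ} (lam : R) (p : Vec R n × Vec R n) : Vec R n × Vec R n :=
  (sm lam p.1, sm lam p.2)

/-- A subsemimodule of `(R^n)²`. -/
def IsPairSemimodule {n : ℕ} (W : Set (Vec R n × Vec R n)) : Prop :=
  ∀ p ∈ W, ∀ q ∈ W, ∀ lam mu : R, (smP lam p ⊔ smP mu q) ∈ W

/-- A congruence on `R^n`: an equivalence relation which is a
subsemimodule of `(R^n)²`. -/
def IsCongruence {n : ℕ} (W : Set (Vec R n × Vec R n)) : Prop :=
  Equivalence (fun x y => (x, y) ∈ W) ∧ IsPairSemimodule W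

/-- The (max-plus) kernel of a matrix: `ker E = {(x,y) : E x = E y}`. -/
def kerM {p n : ℕ} (E : Matrix (Fin p) (Fin n) R) : Set (Vec R n × Vec R n) :=
  {w | mulVecMP E w.1 = mulVecMP E w.2}

/-- The image of a matrix: `Im E = {E x}`. -/
def imM {n q : ℕ} (E : Matrix (Fin n) (Fin q) R) : Set (Vec R n) :=
  {y | ∃ x : Vec R q, y = mulVecMP E x}

/-- `A W = {(A x, A y) : (x,y) ∈ W}` for a set of pairs `W`. -/
def mapCong {n : ℕ} (A : Matrix (Fin n) (Fin n) R) (W : Set (Vec R n × Vec R n)) :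
    Set (Vec R n × Vec R n) :=
  {p | ∃ w ∈ W, p = (mulVecMP A w.1, mulVecMP A w.2)}

/-- `A S = {A x : x ∈ S}`. -/
def mapSet {n : ℕ} (A : Matrix (Fin n) (Fin n) R) (S : Set (Vec R n)) : Set (Vec R n) :=
  {y | ∃ x ∈ S, y = mulVecMP A x}

/-- `A⁻¹ S = {x : A x ∈ S}`. -/
def invSet {n : ℕ} (A : Matrix (Fin n) (Fin n) R) (S : Set (Vec R n)) : Set (Vec R n) :=
  {x | mulVecMP A x ∈ S}

/-- `A⁻¹ U = {(x,y) : (A x, A y) ∈ U}` for a set of pairs `U`. -/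
def invPair {n : ℕ} (A : Matrix (Fin n) (Fin n) R) (U : Set (Vec R n × Vec R n)) :
    Set (Vec R n × Vec R n) :=
  {p | (mulVecMP A p.1, mulVecMP A p.2) ∈ U}

/-- The max-plus sum of two subsets of `R^n`: `X ⊕ Y = {x ⊕ y : x ∈ X, y ∈ Y}`. -/
def setSum {n : ℕ} (X Y : Set (Vec R n)) : Set (Vec R n) :=
  {z | ∃ x ∈ X, ∃ y ∈ Y, z = x ⊔ y}

/-- The max-plus sum of two subsets of `(R^n)²`. -/
def pairSum {n : ℕ} (X Y : Set (Vec R n × Vec R n)) : Set (Vec R n × Vec R n) :=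
  {z | ∃ x ∈ X, ∃ y ∈ Y, z = x ⊔ y}

/-- `W` is `(C,A)`-conditioned invariant: `A (W ∩ ker C) ⊆ W`. -/
def CondInv {n q : ℕ} (C : Matrix (Fin q) (Fin n) R) (A : Matrix (Fin n) (Fin n) R)
    (W : Set (Vec R n × Vec R n)) : Prop :=
  mapCong A (W ∩ kerM C) ⊆ W

/-- `X` is `(A,B)`-controlled invariant: `A X ⊆ X ⊕ Im B`. -/
def ContrInv {n q : ℕ} (A : Matrix (Fin n) (Fin n) R) (B : Matrix (Fin n) (Fin q) R)
    (X : Set (Vec R n)) : Prop :=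
  mapSet A X ⊆ setSum X (imM B)

/-- The max-plus scalar product `uᵗ v = ⊕_i u_i ⊙ v_i = max_i (u_i + v_i)`. -/
def dotMP {n : ℕ} (u v : Vec R n) : R := Finset.univ.sup fun i => u i + v i

/-- The orthogonal of a semimodule `X ⊆ R^n`:
`X^⊥ = {(x,y) : xᵗ z = yᵗ z, ∀ z ∈ X}`. -/
def orthS {n : ℕ} (X : Set (Vec R n)) : Set (Vec R n × Vec R n) :=
  {p | ∀ z ∈ X, dotMP p.1 z = dotMP p.2 z}

/-- The orthogonal of a congruence (or set of pairs) `W ⊆ (R^n)²`: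
`W^⊤ = {z : xᵗ z = yᵗ z, ∀ (x,y) ∈ W}`. -/
def orthC {n : ℕ} (W : Set (Vec R n × Vec R n)) : Set (Vec R n) :=
  {z | ∀ p ∈ W, dotMP p.1 z = dotMP p.2 z}

/-- The smallest congruence containing a set `S ⊆ (R^n)²`. -/
def spanCong {n : ℕ} (S : Set (Vec R n × Vec R n)) : Set (Vec R n × Vec R n) :=
  ⋂₀ {W | IsCongruence W ∧ S ⊆ W}

/-- The smallest semimodule containing a set `S ⊆ R^n`. -/
def spanSet {n : ℕ} (S : Set (Vec R n)) : Set (Vec R n) :=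
  ⋂₀ {K | IsSemimodule K ∧ S ⊆ K}

end Defs


/-!
The max-plus map `x ↦ E x` is residuated: `E♯ y := ⋀_i (y_i - E_ik)` is continuous and satisfies
`E E♯ E = E`. Hence `Im E` is the set of fixed points of the continuous map `E E♯`, which is closed
because `ℝ_max^n` is Hausdorff.
-/

theorem Set.range_eq_fixedPoints_comp {α β : Type*} {l : α → β} {u : β → α}
    (h : ∀ x, l (u (l x)) = l x) : Set.range l = Function.fixedPoints (l ∘ u) :=
  Set.ext fun y => ⟨by rintro ⟨x, rfl⟩; exact h x, fun hy => ⟨u y, hy⟩⟩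

namespace Rmax

def addCoeOrderIso (r : ℝ) : Rmax ≃o Rmax where
  toFun a := (r : Rmax) + a
  invFun a := ((-r : ℝ) : Rmax) + a
  left_inv a := by simp [← add_assoc, ← WithBot.coe_add]
  right_inv a := by simp [← add_assoc, ← WithBot.coe_add]
  map_rel_iff' := WithBot.add_le_add_iff_left WithBot.coe_ne_bot

theorem continuous_add_left (c : Rmax) : Continuous (c + ·) := by
  induction c using WithBot.recBotCoe with
  | bot => simpa only [WithBot.bot_add] using continuous_const
  | coe r => exact (addCoeOrderIso r).continuous

/-- The residual `a - c`, the largest `x` with `c + x ≤ a` when `c ≠ ⊥`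
(for `c = ⊥` it is the junk value `a`). -/
def resid (c a : Rmax) : Rmax := (addCoeOrderIso (c.unbotD 0)).symm a

theorem add_le_iff_le_resid {c x a : Rmax} (hc : c ≠ ⊥) : c + x ≤ a ↔ x ≤ resid c a := by
  lift c to ℝ using hc
  exact (addCoeOrderIso c).le_symm_apply.symm

theorem continuous_resid (c : Rmax) : Continuous (resid c) :=
  (addCoeOrderIso _).symm.continuous

end Rmax

section MulVec

variable {R : Type*} [LinearOrder R] [Add R] [OrderBot R] {m n : ℕ}

theorem add_le_mulVecMP (A : Matrix (Fin m) (Fin n) R) (x : Vec R n) (i : Fin m) (k : Fin n) :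
    A i k + x k ≤ mulVecMP A x i :=
  Finset.le_sup (f := fun k => A i k + x k) (Finset.mem_univ k)

theorem mulVecMP_le_iff {A : Matrix (Fin m) (Fin n) R} {x : Vec R n} {y : Vec R m} :
    mulVecMP A x ≤ y ↔ ∀ i k, A i k + x k ≤ y i := by
  simp only [Pi.le_def, mulVecMP, Finset.sup_le_iff, Finset.mem_univ, true_implies]

end MulVec

theorem continuous_mulVecMP {m n : ℕ} (A : Matrix (Fin m) (Fin n) Rmax) :
    Continuous (mulVecMP A) :=
  continuous_pi fun i => Continuous.finset_sup_apply fun k _ =>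
    (Rmax.continuous_add_left (A i k)).comp (continuous_apply k)

section Residuation

variable {n q : ℕ} (E : Matrix (Fin n) (Fin q) Rmax)

noncomputable def colSupport (k : Fin q) : Finset (Fin n) :=
  Finset.univ.filter (E · k ≠ ⊥)

/-- `E♯ y`, the largest `x` with `E x ≤ y`, except on the coordinates of the zero columns of `E`,
where every value is admissible and `⊥` is chosen. -/
noncomputable def resMulVecMP (y : Vec Rmax n) : Vec Rmax q := fun k =>
  if h : (colSupport E k).Nonempty then
    (colSupport E k).inf' h fun i => Rmax.resid (E i k) (y i)
  else ⊥

theorem continuous_resMulVecMP : Continuous (resMulVecMP E) := by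
  refine continuous_pi fun k => ?_
  by_cases h : (colSupport E k).Nonempty
  · simp only [resMulVecMP, dif_pos h]
    exact Continuous.finset_inf'_apply h fun i _ =>
      (Rmax.continuous_resid (E i k)).comp (continuous_apply i)
  · simp only [resMulVecMP, dif_neg h]
    exact continuous_const

theorem mulVecMP_resMulVecMP_le (y : Vec Rmax n) : mulVecMP E (resMulVecMP E y) ≤ y := by
  refine mulVecMP_le_iff.2 fun i k => ?_
  by_cases hik : E i k = ⊥
  · simp [hik]
  have hi : i ∈ colSupport E k := by simpa [colSupport] using hik
  rw [Rmax.add_le_iff_le_resid hik, resMulVecMP, dif_pos ⟨i, hi⟩]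
  exact Finset.inf'_le _ hi

theorem le_resMulVecMP {x : Vec Rmax q} {y : Vec Rmax n} (h : mulVecMP E x ≤ y) {k : Fin q}
    (hk : (colSupport E k).Nonempty) : x k ≤ resMulVecMP E y k := by
  rw [resMulVecMP, dif_pos hk]
  refine Finset.le_inf' _ _ fun i hi => ?_
  rw [← Rmax.add_le_iff_le_resid (by simpa [colSupport] using hi)]
  exact mulVecMP_le_iff.1 h i k

theorem mulVecMP_resMulVecMP_mulVecMP (x : Vec Rmax q) :
    mulVecMP E (resMulVecMP E (mulVecMP E x)) = mulVecMP E x := by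
  refine le_antisymm (mulVecMP_resMulVecMP_le E _) (mulVecMP_le_iff.2 fun i k => ?_)
  by_cases hik : E i k = ⊥
  · simp [hik]
  have hk : (colSupport E k).Nonempty := ⟨i, by simpa [colSupport] using hik⟩
  exact (add_le_add_right (le_resMulVecMP E le_rfl hk) _).trans (add_le_mulVecMP E _ i k)

end Residuation

/-- Every finitely generated subsemimodule of `ℝ_max^n`
(i.e. the image `Im E = {E x : x ∈ ℝ_max^q}` of a matrix
`E ∈ ℝ_max^{n×q}`) is closed in `ℝ_max^n`. -/
theorem finitely_generated_subsemimodules_are_closed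
    {n q : ℕ} (E : Matrix (Fin n) (Fin q) Rmax) :
    IsClosed (imM E) := by
  have him : imM E = Set.range (mulVecMP E) := Set.ext fun y => exists_congr fun x => eq_comm
  rw [him, Set.range_eq_fixedPoints_comp (mulVecMP_resMulVecMP_mulVecMP E)]
  exact isClosed_fixedPoints ((continuous_mulVecMP E).comp (continuous_resMulVecMP E))
end

section
/- Let A ∈ ℝ_max^{n×n}, C ∈ ℝ_max^{q×n}, let V ⊂ (ℝ_max^n)² be a congruence, and let W be a congruence containing V. Then W is (C,A)-conditioned invariant if and only if the following holds: for any two trajectories {x(k)} and {x'(k)} of the system x(k+1) ∼_V A x(k) with outputs y(k)=Cx(k), y'(k)=Cx'(k), and any m ∈ ℕ, if x(0) ∼_W x'(0) and y(k)=y'(k) for k=0,…,m-1, then x(m) ∼_W x'(m). (That is, the equivalence class of x(m) modulo W is uniquely determined by the class of x(0) modulo W and the observations y(0),…,y(m-1).) -/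
/-- Let `W` be a congruence containing the perturbation
congruence `V`.  Then `W` is `(C,A)`-conditioned invariant iff for any two
trajectories of the perturbed system `x(k+1) ∼_V A x(k)` with outputs
`y(k) = C x(k)`, and any `m`, whenever the initial states are equivalent
mod `W` and the outputs agree at times `0, …, m-1`, the states at time `m`
are equivalent mod `W`. -/
theorem conditioned_invariant_iff_observation
    {n q : ℕ} (A : Matrix (Fin n) (Fin n) Rmax) (C : Matrix (Fin q) (Fin n) Rmax)
    (V W : Set (Vec Rmax n × Vec Rmax n))
    (hV : IsCongruence V) (hW : IsCongruence W) (hVW : V ⊆ W) :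
    CondInv C A W ↔
      ∀ x x' : ℕ → Vec Rmax n,
        (∀ k, (x (k + 1), mulVecMP A (x k)) ∈ V) →
        (∀ k, (x' (k + 1), mulVecMP A (x' k)) ∈ V) →
        ∀ m : ℕ, (x 0, x' 0) ∈ W →
          (∀ k < m, mulVecMP C (x k) = mulVecMP C (x' k)) →
          (x m, x' m) ∈ W := by
  constructor
  · intro hCI x x' hx hx' m
    induction m with
    | zero => intro h0 _; exact h0
    | succ m ih =>
      intro h0 hout
      have hm : (x m, x' m) ∈ W := ih h0 (fun k hk => hout k (Nat.lt_succ_of_lt hk))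
      have hker : (x m, x' m) ∈ kerM C := hout m (Nat.lt_succ_self m)
      have hA : (mulVecMP A (x m), mulVecMP A (x' m)) ∈ W :=
        hCI ⟨(x m, x' m), ⟨hm, hker⟩, rfl⟩
      have h1 : (x (m + 1), mulVecMP A (x m)) ∈ W := hVW (hx m)
      have h2 : (x' (m + 1), mulVecMP A (x' m)) ∈ W := hVW (hx' m)
      exact hW.1.trans h1 (hW.1.trans hA (hW.1.symm h2))
  · intro h p hp
    obtain ⟨⟨u, v⟩, ⟨huvW, huvK⟩, rfl⟩ := hp
    have hrefl : ∀ z : Vec Rmax n, (z, z) ∈ V := fun z => hV.1.refl z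
    have := h (fun k => (fun w => mulVecMP A w)^[k] u)
      (fun k => (fun w => mulVecMP A w)^[k] v)
      (fun k => by
        simp only [Function.iterate_succ_apply']
        exact hrefl _)
      (fun k => by
        simp only [Function.iterate_succ_apply']
        exact hrefl _)
      1 huvW
      (fun k hk => by
        interval_cases k
        exact huvK)
    simpa using this
end

section
/- Let V ⊂ (ℝ_max^n)² be a congruence, A ∈ ℝ_max^{n×n}, C ∈ ℝ_max^{q×n}. Define ψ(W) := span_cong(V ⊕ A(W ∩ ker C)), the smallest congruence containing V ⊕ A(W ∩ ker C), and the increasing sequence W_1 := V, W_{k+1} := ψ(W_k). Then V_∞ := ⋃_{k∈ℕ} W_k is the minimal (C,A)-conditioned invariant congruence containing V: V_∞ is a (C,A)-conditioned invariant congruence containing V, and it is contained in every (C,A)-conditioned invariant congruence containing V. -/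
section AuxLemmas

lemma sm_zero' {n : ℕ} (x : Vec Rmax n) : sm (0 : Rmax) x = x := by
  funext i; simp [sm]

lemma smP_zero' {n : ℕ} (p : Vec Rmax n × Vec Rmax n) : smP (0 : Rmax) p = p := by
  cases p; simp [smP, sm_zero']

/-- The bottom vector. -/
def bvec (n : ℕ) : Vec Rmax n := fun _ => ⊥

lemma bvec_le {n : ℕ} (x : Vec Rmax n) : bvec n ≤ x := fun i => bot_le

lemma mulVecMP_bvec {m n : ℕ} (A : Matrix (Fin m) (Fin n) Rmax) :
    mulVecMP A (bvec n) = bvec m := by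
  funext i
  simp only [mulVecMP, bvec]
  apply le_antisymm
  · exact Finset.sup_le fun k _ => by simp
  · exact bot_le

lemma cong_sup_mem {n : ℕ} {W : Set (Vec Rmax n × Vec Rmax n)} (hW : IsCongruence W)
    {p q : Vec Rmax n × Vec Rmax n} (hp : p ∈ W) (hq : q ∈ W) : p ⊔ q ∈ W := by
  have := hW.2 p hp q hq 0 0
  rwa [smP_zero', smP_zero'] at this

lemma subset_spanCong {n : ℕ} (S : Set (Vec Rmax n × Vec Rmax n)) : S ⊆ spanCong S :=
  fun p hp => Set.mem_sInter.mpr fun _ hW => hW.2 hp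

lemma spanCong_subset {n : ℕ} {S W : Set (Vec Rmax n × Vec Rmax n)}
    (hW : IsCongruence W) (hSW : S ⊆ W) : spanCong S ⊆ W :=
  fun _ hp => Set.mem_sInter.mp hp W ⟨hW, hSW⟩

lemma spanCong_isCongruence {n : ℕ} (S : Set (Vec Rmax n × Vec Rmax n)) :
    IsCongruence (spanCong S) := by
  constructor
  · constructor
    · intro x
      exact Set.mem_sInter.mpr fun W hW => hW.1.1.refl x
    · intro x y hxy
      exact Set.mem_sInter.mpr fun W hW => hW.1.1.symm (Set.mem_sInter.mp hxy W hW)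
    · intro x y z hxy hyz
      exact Set.mem_sInter.mpr fun W hW =>
        hW.1.1.trans (Set.mem_sInter.mp hxy W hW) (Set.mem_sInter.mp hyz W hW)
  · intro p hp q hq lam mu
    exact Set.mem_sInter.mpr fun W hW =>
      hW.1.2 p (Set.mem_sInter.mp hp W hW) q (Set.mem_sInter.mp hq W hW) lam mu

lemma spanCong_mono {n : ℕ} {S T : Set (Vec Rmax n × Vec Rmax n)} (h : S ⊆ T) :
    spanCong S ⊆ spanCong T :=
  fun p hp => Set.mem_sInter.mpr fun W hW =>
    Set.mem_sInter.mp hp W ⟨hW.1, h.trans hW.2⟩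

lemma mapCong_mono {n : ℕ} (A : Matrix (Fin n) (Fin n) Rmax)
    {S T : Set (Vec Rmax n × Vec Rmax n)} (h : S ⊆ T) : mapCong A S ⊆ mapCong A T :=
  fun p ⟨w, hw, hp⟩ => ⟨w, h hw, hp⟩

lemma pairSum_mono_right {n : ℕ} (X : Set (Vec Rmax n × Vec Rmax n))
    {S T : Set (Vec Rmax n × Vec Rmax n)} (h : S ⊆ T) : pairSum X S ⊆ pairSum X T :=
  fun p ⟨x, hx, y, hy, hp⟩ => ⟨x, hx, y, h hy, hp⟩

end AuxLemmas

/-- For a congruence `V`, the union `V_∞ = ⋃_k W_k` of the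
increasing sequence `W_1 = V`, `W_{k+1} = span_cong (V ⊕ A (W_k ∩ ker C))`
is the minimal `(C,A)`-conditioned invariant congruence containing `V`. -/
theorem minimal_conditioned_invariant_congruence
    {n q : ℕ} (A : Matrix (Fin n) (Fin n) Rmax) (C : Matrix (Fin q) (Fin n) Rmax)
    (V : Set (Vec Rmax n × Vec Rmax n)) (hV : IsCongruence V)
    (Wseq : ℕ → Set (Vec Rmax n × Vec Rmax n))
    (h0 : Wseq 0 = V)
    (hstep : ∀ k, Wseq (k + 1) = spanCong (pairSum V (mapCong A (Wseq k ∩ kerM C)))) :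
    IsCongruence (⋃ k, Wseq k) ∧ V ⊆ (⋃ k, Wseq k) ∧ CondInv C A (⋃ k, Wseq k) ∧
      ∀ W, IsCongruence W → CondInv C A W → V ⊆ W → (⋃ k, Wseq k) ⊆ W := by
  have hcong : ∀ k, IsCongruence (Wseq k) := by
    intro k
    cases k with
    | zero => rw [h0]; exact hV
    | succ k => rw [hstep]; exact spanCong_isCongruence _
  have hVsub : ∀ k, V ⊆ Wseq k := by
    intro k
    cases k with
    | zero => rw [h0]
    | succ k =>
      rw [hstep]
      intro v hv
      apply subset_spanCong
      refine ⟨v, hv, (mulVecMP A (bvec n), mulVecMP A (bvec n)),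
        ⟨(bvec n, bvec n), ⟨(hcong k).1.refl _, rfl⟩, rfl⟩, ?_⟩
      rw [mulVecMP_bvec]
      exact (sup_eq_left.mpr (Prod.le_def.mpr ⟨bvec_le _, bvec_le _⟩)).symm
  have hmono : Monotone Wseq := by
    apply monotone_nat_of_le_succ
    intro k
    induction k with
    | zero => rw [h0]; exact hVsub 1
    | succ k ih =>
      rw [hstep k, hstep (k+1)]
      exact spanCong_mono (pairSum_mono_right _ (mapCong_mono _
        (Set.inter_subset_inter_left _ ih)))
  have hUcong : IsCongruence (⋃ k, Wseq k) := by
    constructor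
    · constructor
      · intro x
        exact Set.mem_iUnion.mpr ⟨0, (hcong 0).1.refl x⟩
      · intro x y hxy
        obtain ⟨k, hk⟩ := Set.mem_iUnion.mp hxy
        exact Set.mem_iUnion.mpr ⟨k, (hcong k).1.symm hk⟩
      · intro x y z hxy hyz
        obtain ⟨i, hi⟩ := Set.mem_iUnion.mp hxy
        obtain ⟨j, hj⟩ := Set.mem_iUnion.mp hyz
        exact Set.mem_iUnion.mpr ⟨max i j,
          (hcong _).1.trans (hmono (le_max_left i j) hi) (hmono (le_max_right i j) hj)⟩
    · intro p hp q hq lam mu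
      obtain ⟨i, hi⟩ := Set.mem_iUnion.mp hp
      obtain ⟨j, hj⟩ := Set.mem_iUnion.mp hq
      exact Set.mem_iUnion.mpr ⟨max i j,
        (hcong _).2 p (hmono (le_max_left i j) hi) q (hmono (le_max_right i j) hj) lam mu⟩
  refine ⟨hUcong, Set.subset_iUnion_of_subset 0 (by rw [h0]), ?_, ?_⟩
  · rintro p ⟨w, ⟨hwU, hwK⟩, hp⟩
    obtain ⟨k, hk⟩ := Set.mem_iUnion.mp hwU
    refine Set.mem_iUnion.mpr ⟨k + 1, ?_⟩
    rw [hstep]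
    apply subset_spanCong
    refine ⟨(bvec n, bvec n), hV.1.refl _, p, ⟨w, ⟨hk, hwK⟩, hp⟩, ?_⟩
    exact (sup_eq_right.mpr (Prod.le_def.mpr ⟨bvec_le _, bvec_le _⟩)).symm
  · intro W hW hWinv hVW
    refine Set.iUnion_subset fun k => ?_
    induction k with
    | zero => rw [h0]; exact hVW
    | succ k ih =>
      rw [hstep]
      apply spanCong_subset hW
      rintro z ⟨x, hx, y, hy, rfl⟩
      have hyW : y ∈ W := hWinv (mapCong_mono A (Set.inter_subset_inter_left _ ih) hy)
      exact cong_sup_mem hW (hVW hx) hyW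
end

section
/- If X and Y are closed subsemimodules of ℝ_max^n (with respect to the product topology induced by the metric d(a,b)=|exp(a)-exp(b)| on ℝ_max), then X ⊕ Y := {x ⊕ y : x ∈ X, y ∈ Y} is a closed subsemimodule of ℝ_max^n. -/
open Set Topology

instance Pi.continuousSup {ι : Type*} {π : ι → Type*} [∀ i, TopologicalSpace (π i)]
    [∀ i, Max (π i)] [∀ i, ContinuousSup (π i)] : ContinuousSup (∀ i, π i) where
  continuous_sup := continuous_pi fun i =>
    ((continuous_apply i).comp continuous_fst).sup ((continuous_apply i).comp continuous_snd)

/- Closedness is local, and near `z` the sum `X ⊔ Y` coincides with the image of the compact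
set `(X ∩ Iic c) ×ˢ (Y ∩ Iic c)`, because `x ⊔ y ≤ c` forces `x ≤ c` and `y ≤ c`. -/
theorem isClosed_image2_sup {E : Type*} [TopologicalSpace E] [T2Space E] [SemilatticeSup E]
    [ContinuousSup E] (hloc : ∀ z : E, ∃ c, Iic c ∈ 𝓝 z ∧ IsCompact (Iic c))
    {X Y : Set E} (hX : IsClosed X) (hY : IsClosed Y) :
    IsClosed (image2 (· ⊔ ·) X Y) := by
  refine isClosed_of_closure_subset fun z hz => ?_
  obtain ⟨c, hcz, hc⟩ := hloc z
  have hlocal : image2 (· ⊔ ·) X Y ∩ Iic c ⊆ image2 (· ⊔ ·) (X ∩ Iic c) (Y ∩ Iic c) := by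
    rintro _ ⟨⟨x, hx, y, hy, rfl⟩, hxy⟩
    exact ⟨x, ⟨hx, le_sup_left.trans hxy⟩, y, ⟨hy, le_sup_right.trans hxy⟩, rfl⟩
  have hcompact : IsCompact (image2 (· ⊔ ·) (X ∩ Iic c) (Y ∩ Iic c)) := by
    rw [← image_uncurry_prod]
    exact ((hc.inter_left hX).prod (hc.inter_left hY)).image continuous_sup
  have hz' : z ∈ closure (image2 (· ⊔ ·) X Y ∩ Iic c) := by
    rw [mem_closure_iff_nhdsWithin_neBot] at hz ⊢
    rwa [nhdsWithin_inter_of_mem' (mem_nhdsWithin_of_mem_nhds hcz)]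
  exact image2_subset inter_subset_left inter_subset_left
    (hcompact.isClosed.closure_subset (closure_mono hlocal hz'))

theorem Pi.exists_Iic_mem_nhds_isCompact {ι α : Type*} [Finite ι]
    [ConditionallyCompleteLinearOrder α] [OrderBot α] [TopologicalSpace α] [OrderTopology α]
    [NoMaxOrder α] (z : ι → α) : ∃ c, Iic c ∈ 𝓝 z ∧ IsCompact (Iic c) := by
  choose c hc using fun i => exists_gt (z i)
  refine ⟨c, ?_, by simpa only [Icc_bot] using isCompact_Icc (a := ⊥) (b := c)⟩
  rw [← pi_univ_Iic]
  exact set_pi_mem_nhds finite_univ fun i _ => Iic_mem_nhds (hc i)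

theorem setSum_eq_image2 {R : Type*} [LinearOrder R] {n : ℕ}
    (X Y : Set (Vec R n)) : setSum X Y = image2 (· ⊔ ·) X Y := by
  ext z
  simp only [setSum, mem_ofPred_eq, mem_image2, eq_comm]

section Semimodule

variable {R : Type*} [LinearOrder R] [Add R] [AddLeftMono R] {n : ℕ}

theorem sm_sup (lam : R) (x y : Vec R n) : sm lam (x ⊔ y) = sm lam x ⊔ sm lam y :=
  funext fun i => (max_add_add_left lam (x i) (y i)).symm

theorem IsSemimodule.setSum {X Y : Set (Vec R n)} (hX : IsSemimodule X)
    (hY : IsSemimodule Y) : IsSemimodule (setSum X Y) := by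
  rintro _ ⟨x₁, hx₁, y₁, hy₁, rfl⟩ _ ⟨x₂, hx₂, y₂, hy₂, rfl⟩ lam mu
  refine ⟨_, hX x₁ hx₁ x₂ hx₂ lam mu, _, hY y₁ hy₁ y₂ hy₂ lam mu, ?_⟩
  rw [sm_sup, sm_sup, sup_sup_sup_comm]

end Semimodule

/-- If `X` and `Y` are closed subsemimodules of `ℝ_max^n`,
then `X ⊕ Y = {x ⊕ y : x ∈ X, y ∈ Y}` is a closed subsemimodule of `ℝ_max^n`. -/
theorem sum_of_closed_semimodules_is_closed_semimodule
    {n : ℕ} (X Y : Set (Vec Rmax n))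
    (hX : IsSemimodule X) (hY : IsSemimodule Y)
    (hXc : IsClosed X) (hYc : IsClosed Y) :
    IsClosed (setSum X Y) ∧ IsSemimodule (setSum X Y) :=
  ⟨setSum_eq_image2 X Y ▸ isClosed_image2_sup Pi.exists_Iic_mem_nhds_isCompact hXc hYc,
    hX.setSum hY⟩
end

section
/- For arbitrary (not necessarily closed) semimodules X₁, X₂ ⊆ ℝ_max^n, the inclusion X₁^⊥ ⊕ X₂^⊥ ⊆ (X₁ ∩ X₂)^⊥ always holds; moreover, the inclusion can be strict: for X₁ = {x ∈ ℝ_max² : x₁ = x₂} and X₂ = {x ∈ ℝ_max² : x₁ > x₂} ∪ {(-∞,-∞)}, one has X₁^⊥ ⊕ X₂^⊥ = X₁^⊥ ⊊ (ℝ_max²)² = (X₁ ∩ X₂)^⊥. -/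
/-!
Orthogonals are antitone in `X` and closed under `⊔`, because the scalar product distributes
over `⊔`; this gives the inclusion. In the example `X₁ ∩ X₂ = {-∞}`, whose orthogonal is
everything, while `((0, -∞), (-∞, -∞))` is separated by `(0, 0) ∈ X₁`. On the other hand
`X₂^⊥ ⊆ X₁^⊥`, since each `(c, c) ∈ X₁` is the limit of the points `(c, c + t) ∈ X₂`, `t < 0`,
so adding `X₂^⊥` to `X₁^⊥` adds nothing.
-/

section General

variable {R : Type*} [LinearOrder R] [Add R] [OrderBot R] {n : ℕ}

theorem dotMP_sup_left [AddRightMono R] (u v z : Vec R n) :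
    dotMP (u ⊔ v) z = dotMP u z ⊔ dotMP v z := by
  simp only [dotMP, Pi.sup_apply, ← max_add_add_right]
  exact Finset.sup_sup

theorem sup_mem_orthS [AddRightMono R] {X : Set (Vec R n)} {p q : Vec R n × Vec R n}
    (hp : p ∈ orthS X) (hq : q ∈ orthS X) : p ⊔ q ∈ orthS X := fun z hz => by
  simp only [Prod.fst_sup, Prod.snd_sup, dotMP_sup_left, hp z hz, hq z hz]

theorem orthS_anti {X Y : Set (Vec R n)} (h : X ⊆ Y) : orthS Y ⊆ orthS X :=
  fun _ hp z hz => hp z (h hz)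

theorem diag_mem_orthS (X : Set (Vec R n)) (x : Vec R n) : (x, x) ∈ orthS X :=
  fun _ _ => rfl

theorem pairSum_orthS_subset_orthS_inter [AddRightMono R] (X₁ X₂ : Set (Vec R n)) :
    pairSum (orthS X₁) (orthS X₂) ⊆ orthS (X₁ ∩ X₂) := by
  rintro _ ⟨p, hp, q, hq, rfl⟩
  exact sup_mem_orthS (orthS_anti Set.inter_subset_left hp)
    (orthS_anti Set.inter_subset_right hq)

theorem pairSum_orthS_eq_left [AddRightMono R] {X₁ X₂ : Set (Vec R n)}
    (h : orthS X₂ ⊆ orthS X₁) : pairSum (orthS X₁) (orthS X₂) = orthS X₁ := by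
  refine Set.Subset.antisymm ?_ fun p hp => ⟨p, hp, ⊥, diag_mem_orthS X₂ ⊥, (sup_bot_eq p).symm⟩
  rintro _ ⟨p, hp, q, hq, rfl⟩
  exact sup_mem_orthS hp (h hq)

theorem dotMP_fin_two (u v : Vec R 2) : dotMP u v = (u 0 + v 0) ⊔ (u 1 + v 1) := by
  simp [dotMP, Fin.univ_succ]

end General

section MaxPlus

variable {n : ℕ}

theorem dotMP_bot_right (u : Vec Rmax n) : dotMP u ⊥ = ⊥ := by
  simp [dotMP]

theorem orthS_singleton_bot : orthS ({⊥} : Set (Vec Rmax n)) = Set.univ :=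
  Set.eq_univ_of_forall fun p z hz => by
    rw [Set.mem_singleton_iff.1 hz, dotMP_bot_right, dotMP_bot_right]

theorem dotMP_zero_zero [NeZero n] : dotMP (0 : Vec Rmax n) 0 = 0 := by
  simpa [dotMP] using Finset.sup_const Finset.univ_nonempty (0 : Rmax)

theorem dotMP_bot_left (z : Vec Rmax n) : dotMP ⊥ z = ⊥ := by
  simp [dotMP]

theorem orthS_ne_univ_of_zero_mem [NeZero n] {X : Set (Vec Rmax n)} (h : 0 ∈ X) :
    orthS X ≠ Set.univ := fun hX => by
  have h0 : ((0, ⊥) : Vec Rmax n × Vec Rmax n) ∈ orthS X := hX ▸ Set.mem_univ _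
  simpa [dotMP_zero_zero, dotMP_bot_left] using h0 0 h

end MaxPlus

theorem WithBot.le_of_forall_neg_add_le {b m : WithBot ℝ} (h : ∀ t : ℝ, t < 0 → b + t ≤ m) :
    b ≤ m := by
  induction b with
  | bot => exact bot_le
  | coe r =>
    induction m with
    | bot => simpa [← WithBot.coe_add] using h (-1) (by norm_num)
    | coe s =>
      exact WithBot.coe_le_coe.2 <| _root_.le_of_forall_neg_add_le fun t ht =>
        WithBot.coe_le_coe.1 (h t ht)

theorem WithBot.sup_le_sup_of_forall_neg {a b c d : WithBot ℝ}
    (h : ∀ t : ℝ, t < 0 → a ⊔ (b + t) = c ⊔ (d + t)) : a ⊔ b ≤ c ⊔ d := by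
  have hle : ∀ t : ℝ, t < 0 → c ⊔ (d + t) ≤ c ⊔ d := fun t ht =>
    sup_le_sup_left (add_le_of_nonpos_right (WithBot.coe_le_zero.2 ht.le)) c
  refine sup_le ?_ (WithBot.le_of_forall_neg_add_le fun t ht => ?_)
  · exact (le_sup_left.trans (h (-1) (by norm_num)).le).trans (hle _ (by norm_num))
  · exact (le_sup_right.trans (h t ht).le).trans (hle t ht)

theorem WithBot.sup_eq_sup_of_forall_neg {a b c d : WithBot ℝ}
    (h : ∀ t : ℝ, t < 0 → a ⊔ (b + t) = c ⊔ (d + t)) : a ⊔ b = c ⊔ d :=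
  le_antisymm (WithBot.sup_le_sup_of_forall_neg h)
    (WithBot.sup_le_sup_of_forall_neg fun t ht => (h t ht).symm)

theorem orthS_lt_subset_orthS_eq :
    orthS {x : Vec Rmax 2 | x 1 < x 0} ⊆ orthS {x | x 0 = x 1} := by
  intro p hp z (hz : z 0 = z 1)
  cases hc : z 0 using WithBot.recBotCoe with
  | bot =>
    have : z = ⊥ := funext fun i => by fin_cases i <;> simp [← hz, hc]
    rw [this, dotMP_bot_right, dotMP_bot_right]
  | coe c =>
    rw [dotMP_fin_two, dotMP_fin_two, ← hz, hc]
    refine WithBot.sup_eq_sup_of_forall_neg fun t ht => ?_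
    have hw : ![(c : Rmax), ↑(c + t)] ∈ {x : Vec Rmax 2 | x 1 < x 0} := by
      show ((c + t : ℝ) : Rmax) < c
      exact_mod_cast (add_lt_iff_neg_left.2 ht)
    simpa [dotMP_fin_two, WithBot.coe_add, add_assoc] using hp _ hw

/-- For arbitrary semimodules `X₁, X₂ ⊆ ℝ_max^n` one always
has `X₁^⊥ ⊕ X₂^⊥ ⊆ (X₁ ∩ X₂)^⊥`, and the inclusion can be strict: for
`X₁ = {x ∈ ℝ_max² : x₁ = x₂}` and
`X₂ = {x ∈ ℝ_max² : x₁ > x₂} ∪ {(-∞,-∞)}` one has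
`X₁^⊥ ⊕ X₂^⊥ = X₁^⊥ ⊊ (ℝ_max²)² = (X₁ ∩ X₂)^⊥`. -/
theorem orthogonal_of_intersection_strict
    {n : ℕ} :
    (∀ X₁ X₂ : Set (Vec Rmax n), IsSemimodule X₁ → IsSemimodule X₂ →
      pairSum (orthS X₁) (orthS X₂) ⊆ orthS (X₁ ∩ X₂)) ∧
    (let X₁ : Set (Vec Rmax 2) := {x | x 0 = x 1}
     let X₂ : Set (Vec Rmax 2) := {x | x 1 < x 0} ∪ {fun _ => (⊥ : Rmax)}
     pairSum (orthS X₁) (orthS X₂) = orthS X₁ ∧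
     orthS X₁ ⊂ (Set.univ : Set (Vec Rmax 2 × Vec Rmax 2)) ∧
     orthS (X₁ ∩ X₂) = (Set.univ : Set (Vec Rmax 2 × Vec Rmax 2))) := by
  refine ⟨fun X₁ X₂ _ _ => pairSum_orthS_subset_orthS_inter X₁ X₂, ?_⟩
  intro X₁ X₂
  have hX₁ : (0 : Vec Rmax 2) ∈ X₁ := rfl
  have hinter : X₁ ∩ X₂ ⊆ {⊥} := by
    rintro x ⟨hx, hlt | hbot⟩
    · exact ((show x 1 < x 0 from hlt).ne' hx).elim
    · exact hbot
  refine ⟨pairSum_orthS_eq_left ((orthS_anti Set.subset_union_left).trans orthS_lt_subset_orthS_eq),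
    Set.ssubset_univ_iff.2 (orthS_ne_univ_of_zero_mem hX₁), ?_⟩
  exact Set.eq_univ_of_univ_subset (orthS_singleton_bot ▸ orthS_anti hinter)
end

section
/- For any matrix E ∈ ℝ_max^{p×n}, (Im E)^⊥ = ker Eᵗ and (ker E)^⊤ = Im Eᵗ; that is, {(x,y) ∈ (ℝ_max^p)² : xᵗz = yᵗz for all z ∈ Im E} = {(x,y) : Eᵗx = Eᵗy}, and {z ∈ ℝ_max^n : xᵗz = yᵗz whenever Ex = Ey} = Im Eᵗ. -/
/-!
Both identities rest on the adjunction `xᵗ (E w) = (Eᵗ x)ᵗ w`, tested on unit vectors. The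
only real work is `(ker E)^⊤ ⊆ Im Eᵗ`. A vector `z` lies in `Im Eᵗ` as soon as every finite
`z_k` is attained by some row `i`, i.e. `z_k - E_ik ≤ z_k' - E_ik'` for all `k'`: then
`u_i = z_k - E_ik` solves `Eᵗ u = z`. If no row attains `z_k`, every row `i` with `E_ik` finite
has some `k'` violating this inequality, and the vector `y` carrying `E_ik - E_ik'` at those `k'`
satisfies `E e_k ≤ E y` but `yᵗ z < z_k = e_kᵗ z`. Since `E x ≤ E y` means `(x ⊕ y, y) ∈ ker E`,
this contradicts `z ∈ (ker E)^⊤`.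
-/

open Finset

section Adjunction

variable {G : Type*} [AddCommMonoid G] [LinearOrder G]

lemma dotMP_comm {n : ℕ} (u v : Vec (WithBot G) n) : dotMP u v = dotMP v u := by
  simp only [dotMP, add_comm (u _)]

def unitMP {n : ℕ} (k : Fin n) : Vec (WithBot G) n := fun k' => if k' = k then 0 else ⊥

lemma dotMP_unitMP {n : ℕ} (v : Vec (WithBot G) n) (k : Fin n) : dotMP v (unitMP k) = v k := by
  refine le_antisymm (Finset.sup_le fun k' _ => ?_) (le_sup_of_le (mem_univ k) (by simp [unitMP]))
  by_cases h : k' = k <;> simp [unitMP, h]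

lemma mulVecMP_unitMP {m n : ℕ} (A : Matrix (Fin m) (Fin n) (WithBot G)) (k : Fin n) :
    mulVecMP A (unitMP k) = fun i => A i k :=
  funext fun i => dotMP_unitMP (A i) k

variable [IsOrderedAddMonoid G]

lemma WithBot.add_finset_sup {ι : Type*} (s : Finset ι) (a : WithBot G) (f : ι → WithBot G) :
    a + s.sup f = s.sup fun i => a + f i :=
  s.apply_sup_eq_sup_comp (a + ·) (fun x y => (max_add_add_left a x y).symm) (WithBot.add_bot a)

lemma WithBot.finset_sup_add {ι : Type*} (s : Finset ι) (a : WithBot G) (f : ι → WithBot G) :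
    s.sup f + a = s.sup fun i => f i + a := by
  simp only [add_comm _ a, WithBot.add_finset_sup]

lemma dotMP_mono_left {n : ℕ} {u u' : Vec (WithBot G) n} (h : u ≤ u') (v : Vec (WithBot G) n) :
    dotMP u v ≤ dotMP u' v :=
  sup_mono_fun fun i _ => add_le_add_left (h i) _

lemma mulVecMP_sup {m n : ℕ} (A : Matrix (Fin m) (Fin n) (WithBot G)) (x y : Vec (WithBot G) n) :
    mulVecMP A (x ⊔ y) = mulVecMP A x ⊔ mulVecMP A y := by
  funext i
  simp only [mulVecMP, Pi.sup_apply, ← Finset.sup_sup]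
  exact sup_congr rfl fun k _ => (max_add_add_left _ _ _).symm

lemma dotMP_mulVecMP {p n : ℕ} (E : Matrix (Fin p) (Fin n) (WithBot G)) (x : Vec (WithBot G) p)
    (w : Vec (WithBot G) n) : dotMP x (mulVecMP E w) = dotMP (mulVecMP E.transpose x) w := by
  simp only [dotMP, mulVecMP, Matrix.transpose_apply, WithBot.add_finset_sup,
    WithBot.finset_sup_add]
  rw [Finset.sup_comm]
  exact sup_congr rfl fun k _ => sup_congr rfl fun i _ => by ac_rfl

lemma orthS_imM {p n : ℕ} (E : Matrix (Fin p) (Fin n) (WithBot G)) :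
    orthS (imM E) = kerM E.transpose := by
  ext ⟨x, y⟩
  simp only [orthS, kerM, imM, Set.mem_ofPred_eq, forall_exists_index, forall_eq_apply_imp_iff,
    dotMP_mulVecMP]
  refine ⟨fun h => funext fun k => ?_, fun h w => by rw [h]⟩
  simpa only [dotMP_unitMP] using h (unitMP k)

lemma imM_transpose_subset_orthC_kerM {p n : ℕ} (E : Matrix (Fin p) (Fin n) (WithBot G)) :
    imM E.transpose ⊆ orthC (kerM E) := by
  rintro _ ⟨u, rfl⟩ ⟨x, y⟩ (hxy : mulVecMP E x = mulVecMP E y)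
  simp only [dotMP_mulVecMP, Matrix.transpose_transpose, hxy]

lemma dotMP_le_of_mem_orthC_kerM {p n : ℕ} {E : Matrix (Fin p) (Fin n) (WithBot G)}
    {z : Vec (WithBot G) n} (hz : z ∈ orthC (kerM E)) {x y : Vec (WithBot G) n}
    (hxy : mulVecMP E x ≤ mulVecMP E y) : dotMP x z ≤ dotMP y z := by
  have hker : (x ⊔ y, y) ∈ kerM E := by
    show mulVecMP E (x ⊔ y) = mulVecMP E y
    rw [mulVecMP_sup, sup_eq_right.mpr hxy]
  exact (dotMP_mono_left le_sup_left z).trans_eq (hz _ hker)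

end Adjunction

section Residuation

variable {G : Type*} [AddCommGroup G]

/-- Max-plus division `a - b`, with the junk value `a` when `b = ⊥`. -/
def WithBot.mpSub (a b : WithBot G) : WithBot G := a + ((-b.unbotD 0 : G) : WithBot G)

namespace WithBot

variable {a b c d : WithBot G}

lemma mpSub_add_cancel (hb : b ≠ ⊥) : mpSub a b + b = a := by
  obtain ⟨g, rfl⟩ := ne_bot_iff_exists.mp hb
  rw [mpSub, unbotD_coe, add_assoc, ← coe_add, neg_add_cancel, coe_zero, add_zero]

variable [PartialOrder G] [IsOrderedAddMonoid G]

lemma mpSub_add_le (h : a + c ≤ d + b) : mpSub a b + c ≤ d := by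
  induction b using recBotCoe with
  | bot =>
    rw [add_bot, le_bot_iff] at h
    simp [mpSub, h]
  | coe g =>
    rwa [← WithBot.add_le_add_iff_right coe_ne_bot, add_right_comm, mpSub_add_cancel coe_ne_bot]

lemma mpSub_add_lt (h : a + c < d + b) : mpSub a b + c < d := by
  have hb : b ≠ ⊥ := by
    rintro rfl
    exact not_lt_bot (add_bot d ▸ h)
  rwa [← WithBot.add_lt_add_iff_right hb, add_right_comm, mpSub_add_cancel hb]

end WithBot

end Residuation

section Duality

variable {G : Type*} [AddCommGroup G] [LinearOrder G]
  {p n : ℕ} {E : Matrix (Fin p) (Fin n) (WithBot G)} {z : Vec (WithBot G) n}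

open WithBot

/-- `z k - E i k ≤ z k' - E i k'` for all `k'`, written without subtraction: row `i` attains the
minimum defining the residuation `(Eᵗ \ z)_i` at `k`. -/
def RowAttains (E : Matrix (Fin p) (Fin n) (WithBot G)) (z : Vec (WithBot G) n) (i : Fin p)
    (k : Fin n) : Prop :=
  E i k ≠ ⊥ ∧ ∀ k', z k + E i k' ≤ z k' + E i k

variable [IsOrderedAddMonoid G]

lemma mem_imM_transpose_of_forall_rowAttains (h : ∀ k, z k ≠ ⊥ → ∃ i, RowAttains E z i k) :
    z ∈ imM E.transpose := by
  classical
  let u : Vec (WithBot G) p := fun i =>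
    univ.sup fun k => if RowAttains E z i k then mpSub (z k) (E i k) else ⊥
  have hle : ∀ i k', E i k' + u i ≤ z k' := by
    intro i k'
    rw [add_finset_sup]
    refine Finset.sup_le fun k _ => ?_
    split_ifs with ht
    · rw [add_comm]
      exact mpSub_add_le (ht.2 k')
    · rw [add_bot]
      exact bot_le
  refine ⟨u, funext fun k => le_antisymm ?_ (Finset.sup_le fun i _ => hle i k)⟩
  rcases eq_or_ne (z k) ⊥ with hk | hk
  · simp [hk]
  obtain ⟨i, ht⟩ := h k hk
  calc z k = E i k + mpSub (z k) (E i k) := by rw [add_comm, mpSub_add_cancel ht.1]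
    _ ≤ E i k + u i := by
      gcongr
      exact le_sup_of_le (mem_univ k) (by rw [if_pos ht])
    _ ≤ mulVecMP E.transpose u k := le_sup (f := fun i => E i k + u i) (mem_univ i)

lemma exists_rowAttains_of_mem_orthC_kerM (hz : z ∈ orthC (kerM E)) {k : Fin n} (hk : z k ≠ ⊥) :
    ∃ i, RowAttains E z i k := by
  classical
  by_contra! hcov
  simp only [RowAttains, not_and, not_forall, not_le] at hcov
  let y : Vec (WithBot G) n := fun k' =>
    univ.sup fun i => if z k' + E i k < z k + E i k' then mpSub (E i k) (E i k') else ⊥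
  have hEy : mulVecMP E (unitMP k) ≤ mulVecMP E y := by
    intro i
    rw [mulVecMP_unitMP]
    rcases eq_or_ne (E i k) ⊥ with hE | hE
    · simp [hE]
    obtain ⟨k', hlt⟩ := hcov i hE
    have hE' : E i k' ≠ ⊥ := by
      rintro h
      rw [h, add_bot] at hlt
      exact not_lt_bot hlt
    calc E i k = E i k' + mpSub (E i k) (E i k') := by rw [add_comm, mpSub_add_cancel hE']
      _ ≤ E i k' + y k' := by
        gcongr
        exact le_sup_of_le (mem_univ i) (by rw [if_pos hlt])
      _ ≤ mulVecMP E y i := le_sup (f := fun k' => E i k' + y k') (mem_univ k')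
  have hyz : dotMP y z < z k := by
    have hbot : ⊥ < z k := bot_lt_iff_ne_bot.mpr hk
    refine (Finset.sup_lt_iff hbot).mpr fun k' _ => ?_
    rw [finset_sup_add]
    refine (Finset.sup_lt_iff hbot).mpr fun i _ => ?_
    split_ifs with hlt
    · exact mpSub_add_lt (by rwa [add_comm (E i k)])
    · rwa [bot_add]
  have hunit := dotMP_le_of_mem_orthC_kerM hz hEy
  rw [dotMP_comm, dotMP_unitMP] at hunit
  exact hunit.not_gt hyz

end Duality

/-- For any matrix `E ∈ ℝ_max^{p×n}`:
`(Im E)^⊥ = ker Eᵗ` and `(ker E)^⊤ = Im Eᵗ`. -/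
theorem orthogonal_of_image_and_kernel
    {p n : ℕ} (E : Matrix (Fin p) (Fin n) Rmax) :
    orthS (imM E) = kerM E.transpose ∧ orthC (kerM E) = imM E.transpose :=
  ⟨orthS_imM E, Set.Subset.antisymm
    (fun _ hz => mem_imM_transpose_of_forall_rowAttains fun _ =>
      exists_rowAttains_of_mem_orthC_kerM hz)
    (imM_transpose_subset_orthC_kerM E)⟩
end
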